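/- Let q be a prime power and let M be a simple GF(q)-representable paving matroid with no coloops. Then the ground set of M is a circuit of M, or r(M) ≤ 2q. -/

import Mathlib

/-!
Fix a base `B`. If two elements `e ≠ f` lie outside `B`, write their vectors in coordinates
`x`, `y` with respect to `B`. Every set of fewer than `r` elements is independent, so `x` and `y`
each vanish at most once and every `x + β y` with `β ≠ 0` vanishes at most twice: otherwise `e`
(resp. `e, f`) together with the rest of `B` would be a dependent set of size `r - 1`. Sending
`i ∈ B` to the slope `β` with `x i + β y i = 0` then has fibres of size at most two, so
`r ≤ 2q`. If at most one element lies outside `B`, a base avoiding a non-coloop `e` can only be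
`E - e`; hence every `E - e` is a base and `E` is a circuit.
-/

namespace Matroid

variable {α : Type*}

/-- A circuit of a matroid is a minimal dependent set. -/
def Circuit (M : Matroid α) (C : Set α) : Prop :=
  M.Dep C ∧ ∀ D, D ⊂ C → M.Indep D

/-- A coloop is an element belonging to every basis. -/
def Coloop (M : Matroid α) (e : α) : Prop :=
  e ∈ M.E ∧ ∀ B, M.IsBase B → e ∈ B

/-- A matroid is simple if every subset of the ground set with at most two
elements is independent. -/
def Simple (M : Matroid α) : Prop :=
  ∀ e ∈ M.E, ∀ f ∈ M.E, M.Indep {e, f}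

/-- The rank of a matroid: the supremum of the cardinalities of its bases. -/
noncomputable def rk (M : Matroid α) : ℕ :=
  sSup {n | ∃ B, M.IsBase B ∧ B.ncard = n}

/-- A matroid is representable over a field `F` if independence in `M` coincides
with linear independence under some assignment of vectors to ground set elements. -/
def RepresentableOver (M : Matroid α) (F : Type) [Field F] : Prop :=
  ∃ (n : ℕ) (φ : α → (Fin n → F)),
    ∀ I, I ⊆ M.E → (M.Indep I ↔ LinearIndependent F (fun x : I => φ x))

/-- An element `e` is `k`-loose if every circuit containing `e` has size
greater than `r - k`, where `r` is the rank of the matroid. -/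
def KLoose (M : Matroid α) (k : ℕ) (e : α) : Prop :=
  e ∈ M.E ∧ ∀ C, M.Circuit C → e ∈ C → M.rk - k < C.ncard

/-- A matroid is `k`-paving if every element is `k`-loose. -/
def KPaving (M : Matroid α) (k : ℕ) : Prop :=
  ∀ e ∈ M.E, M.KLoose k e

end Matroid

open Finset in
theorem Finset.card_le_two_mul_card_of_pencil_zeros {ι F : Type*} [Field F] [Fintype F]
    [DecidableEq F] (s : Finset ι) (x y : ι → F)
    (hx : #{i ∈ s | x i = 0} ≤ 1) (hy : #{i ∈ s | y i = 0} ≤ 1)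
    (hxy : ∀ β : F, β ≠ 0 → #{i ∈ s | x i + β * y i = 0} ≤ 2) :
    #s ≤ 2 * Fintype.card F := by
  classical
  -- `i` is a zero of `x + slope i * y`, unless `y i = 0`
  let slope : ι → F := fun i => if y i = 0 then 0 else -(x i / y i)
  refine card_le_mul_card_image_of_maps_to (fun i _ => mem_univ (slope i)) 2 fun β _ => ?_
  rcases eq_or_ne β 0 with rfl | hβ
  · calc #{i ∈ s | slope i = 0} ≤ #({i ∈ s | x i = 0} ∪ {i ∈ s | y i = 0}) := by
          refine card_le_card fun i hi => ?_
          simp only [mem_filter, mem_union, slope] at hi ⊢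
          split_ifs at hi with hyi
          · exact Or.inr ⟨hi.1, hyi⟩
          · exact Or.inl ⟨hi.1, by simpa [hyi] using hi.2⟩
      _ ≤ 1 + 1 := (card_union_le _ _).trans (add_le_add hx hy)
  · refine (card_le_card fun i hi => ?_).trans (hxy β hβ)
    simp only [mem_filter, slope] at hi ⊢
    split_ifs at hi with hyi
    · exact absurd hi.2.symm hβ
    · refine ⟨hi.1, ?_⟩
      rw [← hi.2]
      field_simp
      ring

open Finset in
theorem Finset.card_filter_eq_zero_le_of_notMem_span {ι R M : Type*} [Semiring R] [DecidableEq R]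
    [AddCommMonoid M] [Module R M] {v : ι → M} {s : Finset ι} {l : ι →₀ R}
    (hl : l ∈ Finsupp.supported R R (s : Set ι)) {k : ℕ}
    (h : ∀ t ⊆ s, #t = k + 1 →
      Finsupp.linearCombination R v l ∉ Submodule.span R (v '' (↑s \ ↑t))) :
    #{i ∈ s | l i = 0} ≤ k := by
  by_contra! hk
  obtain ⟨t, hts, ht⟩ := exists_subset_card_eq hk
  refine h t (hts.trans (filter_subset _ _)) ht
    ((Finsupp.mem_span_image_iff_linearCombination R).2 ⟨l, ?_, rfl⟩)
  rw [Finsupp.mem_supported] at hl ⊢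
  intro i hi
  have hit : i ∉ t := fun hit => (Finsupp.mem_support_iff.1 hi) (mem_filter.1 (hts hit)).2
  simpa [hit] using hl hi

theorem LinearIndepOn.add_smul_notMem_span {ι K V : Type*} [DivisionRing K] [AddCommGroup V]
    [Module K V] {v : ι → V} {a b : ι} {s : Set ι}
    (h : LinearIndepOn K v (insert a (insert b s))) (ha : a ∉ insert b s) (c : K) :
    v a + c • v b ∉ Submodule.span K (v '' s) := by
  intro hmem
  refine ((linearIndepOn_insert ha).1 h).2 ?_
  rw [show v a = v a + c • v b - c • v b by abel]
  exact sub_mem (Submodule.span_mono (Set.image_mono (Set.subset_insert _ _)) hmem)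
    (Submodule.smul_mem _ _ (Submodule.subset_span (Set.mem_image_of_mem _ (Set.mem_insert _ _))))

namespace Matroid

variable {α : Type*} {M : Matroid α}

theorem circuit_iff_isCircuit {C : Set α} : M.Circuit C ↔ M.IsCircuit C :=
  isCircuit_iff_forall_ssubset.symm

theorem IsBase.rk_eq_ncard {B : Set α} (hB : M.IsBase B) : M.rk = B.ncard := by
  have hset : {n | ∃ B', M.IsBase B' ∧ B'.ncard = n} = {B.ncard} := by
    ext n
    constructor
    · rintro ⟨B', hB', rfl⟩
      exact hB'.ncard_eq_ncard_of_isBase hB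
    · rintro rfl
      exact ⟨B, hB, rfl⟩
  rw [rk, hset, csSup_singleton]

theorem mem_span_image_of_isBase {K W : Type*} [DivisionRing K] [AddCommGroup W] [Module K W]
    {φ : α → W} (hφ : ∀ I ⊆ M.E, M.Indep I ↔ LinearIndepOn K φ I) {B : Set α}
    (hB : M.IsBase B) {e : α} (he : e ∈ M.E) : φ e ∈ Submodule.span K (φ '' B) := by
  by_contra h
  have heB : e ∉ B := fun heB => h (Submodule.subset_span (Set.mem_image_of_mem φ heB))
  have hli := (linearIndepOn_insert heB).2 ⟨(hφ B hB.subset_ground).1 hB.indep, h⟩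
  exact (hB.insert_dep ⟨he, heB⟩).not_indep
    ((hφ _ (Set.insert_subset he hB.subset_ground)).2 hli)

theorem indep_of_ncard_lt_rk [M.Finite] (hpaving : ∀ C, M.Circuit C → M.rk ≤ C.ncard)
    {D : Set α} (hD : D ⊆ M.E) (hDr : D.ncard < M.rk) : M.Indep D := by
  by_contra hnot
  obtain ⟨C, hCD, hC⟩ := Dep.exists_isCircuit_subset (M := M) ⟨hnot, hD⟩
  have hCr := hpaving C (circuit_iff_isCircuit.2 hC)
  have hCD' := Set.ncard_le_ncard hCD (M.ground_finite.subset hD)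
  omega

theorem indep_union_sdiff_of_ncard_lt [M.Finite] (hpaving : ∀ C, M.Circuit C → M.rk ≤ C.ncard)
    {s t : Finset α} (hB : M.IsBase ↑s) (hts : t ⊆ s)
    {S : Set α} (hS : S ⊆ M.E) (hSt : S.ncard < t.card) : M.Indep (S ∪ (↑s \ ↑t)) := by
  refine indep_of_ncard_lt_rk hpaving
    (Set.union_subset hS (Set.sdiff_subset.trans hB.subset_ground)) ?_
  have hunion := Set.ncard_union_le S (↑s \ ↑t : Set α)
  rw [Set.ncard_sdiff (Finset.coe_subset.2 hts), Set.ncard_coe_finset, Set.ncard_coe_finset]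
    at hunion
  have hcard := Finset.card_le_card hts
  rw [hB.rk_eq_ncard, Set.ncard_coe_finset]
  omega

theorem circuit_ground_of_forall_isBase_sdiff (hE : M.E.Nonempty)
    (h : ∀ e ∈ M.E, M.IsBase (M.E \ {e})) : M.Circuit M.E := by
  rw [circuit_iff_isCircuit, isCircuit_iff_dep_forall_sdiff_singleton_indep]
  obtain ⟨e, he⟩ := hE
  refine ⟨⟨fun hind => ?_, subset_rfl⟩, fun f hf => (h f hf).indep⟩
  have := (h e he).eq_of_subset_indep hind Set.sdiff_subset
  exact (this ▸ Set.notMem_sdiff_of_mem (Set.mem_singleton e)) he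

theorem isBase_ground_sdiff_singleton [M.Finite] (hE : M.E.ncard ≤ M.rk + 1) {e : α}
    (he : e ∈ M.E) (he' : ¬ M.Coloop e) : M.IsBase (M.E \ {e}) := by
  obtain ⟨B, hB, heB⟩ : ∃ B, M.IsBase B ∧ e ∉ B := by simpa [Coloop, he] using he'
  have hcard : (M.E \ {e}).ncard ≤ B.ncard := by
    rw [Set.ncard_sdiff_singleton_of_mem he, ← hB.rk_eq_ncard]
    omega
  rwa [← Set.eq_of_subset_of_ncard_le (Set.subset_sdiff_singleton hB.subset_ground heB) hcard
    (M.ground_finite.sdiff)]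

open Finset in
theorem rk_le_two_mul_card_of_representableOver {F : Type} [Field F] [Fintype F] [M.Finite]
    (hrep : M.RepresentableOver F) (hpaving : ∀ C, M.Circuit C → M.rk ≤ C.ncard)
    {B : Set α} (hB : M.IsBase B) {e f : α} (he : e ∈ M.E \ B) (hf : f ∈ M.E \ B)
    (hef : e ≠ f) : M.rk ≤ 2 * Fintype.card F := by
  classical
  obtain ⟨n, φ, hφ⟩ := hrep
  obtain ⟨s, rfl⟩ := (M.ground_finite.subset hB.subset_ground).exists_finset_coe
  have hli : ∀ {S : Set α} {t : Finset α}, S ⊆ M.E → t ⊆ s → S.ncard < #t →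
      LinearIndepOn F φ (S ∪ (↑s \ ↑t)) := fun hS hts hSt =>
    (hφ _ (Set.union_subset hS (Set.sdiff_subset.trans hB.subset_ground))).1
      (indep_union_sdiff_of_ncard_lt hpaving hB hts hS hSt)
  have hcoord : ∀ g ∈ M.E \ ↑s, ∀ l ∈ Finsupp.supported F F ↑s,
      Finsupp.linearCombination F φ l = φ g → #{i ∈ s | l i = 0} ≤ 1 := by
    rintro g ⟨hgE, hgs⟩ l hl hlg
    refine card_filter_eq_zero_le_of_notMem_span (v := φ) hl fun t hts ht => ?_
    have hgt := hli (Set.singleton_subset_iff.2 hgE) hts (by simp [ht])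
    rw [Set.singleton_union] at hgt
    exact hlg ▸ ((linearIndepOn_insert fun h => hgs h.1).1 hgt).2
  obtain ⟨x, hxs, hx⟩ := (Finsupp.mem_span_image_iff_linearCombination F).1
    (mem_span_image_of_isBase hφ hB he.1)
  obtain ⟨y, hys, hy⟩ := (Finsupp.mem_span_image_iff_linearCombination F).1
    (mem_span_image_of_isBase hφ hB hf.1)
  rw [hB.rk_eq_ncard, Set.ncard_coe_finset]
  refine card_le_two_mul_card_of_pencil_zeros s x y (hcoord e he x hxs hx)
    (hcoord f hf y hys hy) fun β _ => ?_
  have hpencil := card_filter_eq_zero_le_of_notMem_span (v := φ) (k := 2)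
    (add_mem hxs (Submodule.smul_mem _ β hys)) fun t hts ht => ?_
  · convert hpencil using 3
    simp
  have heft := hli (Set.pair_subset he.1 hf.1) hts (by rw [Set.ncard_pair hef, ht]; norm_num)
  rw [Set.insert_union, Set.singleton_union] at heft
  rw [map_add, map_smul, hx, hy]
  exact heft.add_smul_notMem_span (by simp [hef, he.2]) β

end Matroid

open Matroid in
theorem paving_rank_bound_general {α : Type*} (q : ℕ)
    (F : Type) [Field F] [Fintype F] (hF : Fintype.card F = q)
    (M : Matroid α) [M.Finite]
    (hrep : M.RepresentableOver F) (hcoloop : ∀ x, ¬ M.Coloop x)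
    (hpaving : ∀ C, M.Circuit C → M.rk ≤ C.ncard) :
    M.Circuit M.E ∨ M.rk ≤ 2 * q := by
  obtain ⟨B, hB⟩ := M.exists_isBase
  rcases Nat.eq_zero_or_pos M.rk with hr | hr
  · exact Or.inr (hr ▸ Nat.zero_le _)
  rcases le_or_gt M.E.ncard (M.rk + 1) with hsmall | hlarge
  · have hE : M.E.Nonempty :=
      (Set.nonempty_of_ncard_ne_zero (hB.rk_eq_ncard ▸ hr.ne')).mono hB.subset_ground
    exact Or.inl (circuit_ground_of_forall_isBase_sdiff hE fun e he =>
      isBase_ground_sdiff_singleton hsmall he (hcoloop e))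
  · have hsdiff : 1 < (M.E \ B).ncard := by
      rw [Set.ncard_sdiff hB.subset_ground (M.ground_finite.subset hB.subset_ground),
        ← hB.rk_eq_ncard]
      omega
    obtain ⟨e, f, he, hf, hef⟩ := (Set.one_lt_ncard_iff M.ground_finite.sdiff).1 hsdiff
    exact Or.inr (hF ▸ rk_le_two_mul_card_of_representableOver hrep hpaving hB he hf hef)

/-- A simple `GF(q)`-representable paving matroid with no coloops is a circuit, or
has rank at most `2q`. Here paving means every circuit has size at least the rank. -/
theorem paving_rank_bound {α : Type*} (q : ℕ) (hq : IsPrimePow q)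
    (F : Type) [Field F] [Fintype F] (hF : Fintype.card F = q)
    (M : Matroid α) [M.Finite] (hsimple : M.Simple)
    (hrep : M.RepresentableOver F) (hcoloop : ∀ x, ¬ M.Coloop x)
    (hpaving : ∀ C, M.Circuit C → M.rk ≤ C.ncard) :
    M.Circuit M.E ∨ M.rk ≤ 2 * q :=
  paving_rank_bound_general q F hF M hrep hcoloop hpaving
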